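/- If u, v ∈ ℤ^n have conical coordinates supported in a common closed sectorial cone (i.e., there is some index k with the k-th conical coordinate of u and of v both zero), then w(u+v) = w(u) + w(v). -/
import Mathlib


/-- `m(u) = max {0, -u_1, ..., -u_n}` as an integer. -/
def mneg {n : ℕ} (u : Fin n → ℤ) : ℤ :=
  ((Finset.univ.sup fun i => (-u i).toNat : ℕ) : ℤ)

/-- The polyhedral weight `w(u) = Σ u_i + (n+1)·m(u)`. -/
def wgt {n : ℕ} (u : Fin n → ℤ) : ℤ :=
  (∑ i, u i) + (n + 1) * mneg u

/-- The conical coordinates of `u`: `u⁽⁰⁾ = m(u)` and `u⁽ʲ⁾ = u_j + m(u)` for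
`1 ≤ j ≤ n`, so that `u = u⁽⁰⁾·U + Σⱼ u⁽ʲ⁾ eⱼ`, all coordinates nonnegative and
at least one zero, and `w(u) = Σ u⁽ʲ⁾`. -/
def conical {n : ℕ} (u : Fin n → ℤ) : Fin (n + 1) → ℤ :=
  Fin.cons (mneg u) (fun j => u j + mneg u)


lemma mneg_nonneg {n : ℕ} (u : Fin n → ℤ) : 0 ≤ mneg u := Int.ofNat_nonneg _

lemma neg_le_mneg {n : ℕ} (u : Fin n → ℤ) (i : Fin n) : -u i ≤ mneg u := by
  refine le_trans (Int.self_le_toNat _) ?_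
  unfold mneg
  exact_mod_cast Finset.le_sup (f := fun i => (-u i).toNat) (Finset.mem_univ i)

lemma mneg_le {n : ℕ} (u : Fin n → ℤ) (M : ℤ) (h0 : 0 ≤ M)
    (h : ∀ i, -u i ≤ M) : mneg u ≤ M := by
  have : (Finset.univ.sup fun i => (-u i).toNat) ≤ M.toNat := by
    refine Finset.sup_le fun i _ => ?_
    exact Int.toNat_le_toNat (h i)
  calc (mneg u : ℤ) ≤ (M.toNat : ℤ) := by unfold mneg; exact_mod_cast this
    _ = M := Int.toNat_of_nonneg h0

lemma mneg_add {n : ℕ} (u v : Fin n → ℤ)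
    (h : ∃ k : Fin (n + 1), conical u k = 0 ∧ conical v k = 0) :
    mneg (u + v) = mneg u + mneg v := by
  obtain ⟨k, hu, hv⟩ := h
  refine Fin.cases ?_ ?_ k hu hv
  · intro hu hv
    simp only [conical, Fin.cons_zero] at hu hv
    rw [hu, hv, add_zero]
    refine le_antisymm (mneg_le _ 0 le_rfl fun i => ?_) (mneg_nonneg _)
    have h1 := neg_le_mneg u i; have h2 := neg_le_mneg v i
    rw [hu] at h1; rw [hv] at h2
    simp only [Pi.add_apply, neg_add]
    linarith
  · intro j hu hv
    simp only [conical, Fin.cons_succ] at hu hv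
    have hu' : mneg u = -u j := by linarith
    have hv' : mneg v = -v j := by linarith
    refine le_antisymm (mneg_le _ _ (add_nonneg (mneg_nonneg u) (mneg_nonneg v)) fun i => ?_) ?_
    · have h1 := neg_le_mneg u i; have h2 := neg_le_mneg v i
      simp only [Pi.add_apply, neg_add]
      linarith
    · have := neg_le_mneg (u + v) j
      simp only [Pi.add_apply, neg_add] at this
      linarith

/-- If `u` and `v` lie in a common closed sectorial cone (some conical coordinate
vanishes for both), then the weight is additive: `w(u+v) = w(u) + w(v)`. -/
theorem weight_add_of_common_cone (n : ℕ) (hn : 1 ≤ n) (u v : Fin n → ℤ)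
    (h : ∃ k : Fin (n + 1), conical u k = 0 ∧ conical v k = 0) :
    wgt (u + v) = wgt u + wgt v := by
  simp only [wgt, mneg_add u v h, Pi.add_apply, Finset.sum_add_distrib]
  ring
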